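/- Equality case (sharpness) of the radial logarithmic Sobolev inequality: let n ≥ 1 be an integer and τ₀ > 0, and define w : (0,∞) → ℝ by w(r) = (ω_n · e^(−r²/(4τ₀)) / (4πτ₀)^((n+1)/2))^(1/2). Then ∫₀^∞ r^n w(r)² dr = 1 and 4τ₀ · ∫₀^∞ r^n w'(r)² dr = ∫₀^∞ r^n w(r)² log(w(r)²) dr + ((n+1)/2) · log(4πτ₀) + (n+1) − log(ω_n); in particular the radial logarithmic Sobolev inequality on the half-line is sharp. -/

import Mathlib

open MeasureTheory Set

/-- The volume of the unit `n`-sphere, `ω_n = 2 π^((n+1)/2) / Γ((n+1)/2)`. -/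
noncomputable def sphereVolume (n : ℕ) : ℝ :=
  2 * Real.pi ^ (((n : ℝ) + 1) / 2) / Real.Gamma (((n : ℝ) + 1) / 2)

/-!
The profile is a Gaussian: `w² = C e^(-r²/(4τ))` with `C = ω_n / (4πτ)^((n+1)/2)`, so
`w' = -(r/(4τ)) w` and `log w² = log C - r²/(4τ)`. Both the Fisher information and the
entropy therefore reduce to the moments `∫₀^∞ r^k e^(-b r²) dr = b^(-(k+1)/2) Γ((k+1)/2) / 2`
for `k = n` and `k = n + 2`. The choice of `ω_n` makes the zeroth moment `1`, and
`Γ(m + 1) = m Γ(m)` makes the second moment `2 (n+1) τ`, after which both sides equal `(n+1)/2`.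
-/

open Real

section GaussianMoments

variable {b : ℝ}

lemma integrableOn_pow_mul_exp_neg_mul_sq (hb : 0 < b) (k : ℕ) :
    IntegrableOn (fun x : ℝ => x ^ k * exp (-b * x ^ 2)) (Ioi 0) := by
  simpa only [rpow_natCast] using
    integrableOn_rpow_mul_exp_neg_mul_sq hb (by linarith [k.cast_nonneg (α := ℝ)] : (-1 : ℝ) < k)

lemma integral_pow_mul_exp_neg_mul_sq (hb : 0 < b) (k : ℕ) :
    ∫ x in Ioi (0 : ℝ), x ^ k * exp (-b * x ^ 2) =
      b ^ (-((k : ℝ) + 1) / 2) * Gamma (((k : ℝ) + 1) / 2) / 2 := by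
  have h := integral_rpow_mul_exp_neg_mul_rpow two_pos
    (by linarith [k.cast_nonneg (α := ℝ)] : (-1 : ℝ) < k) hb
  simp only [rpow_two, rpow_natCast] at h
  rw [h]
  ring

lemma integral_pow_add_two_mul_exp_neg_mul_sq (hb : 0 < b) (k : ℕ) :
    ∫ x in Ioi (0 : ℝ), x ^ (k + 2) * exp (-b * x ^ 2) =
      ((k : ℝ) + 1) / (2 * b) * ∫ x in Ioi (0 : ℝ), x ^ k * exp (-b * x ^ 2) := by
  have hk : ((k : ℝ) + 1) / 2 ≠ 0 := by positivity
  rw [integral_pow_mul_exp_neg_mul_sq hb, integral_pow_mul_exp_neg_mul_sq hb, Nat.cast_add,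
    Nat.cast_two, show ((k : ℝ) + 2 + 1) / 2 = ((k : ℝ) + 1) / 2 + 1 by ring,
    show -((k : ℝ) + 2 + 1) / 2 = -((k : ℝ) + 1) / 2 + -1 by ring,
    Gamma_add_one hk, rpow_add hb, rpow_neg_one]
  field_simp

end GaussianMoments

lemma sphereVolume_pos (n : ℕ) : 0 < sphereVolume n :=
  div_pos (by positivity) (Gamma_pos_of_pos (by positivity))

/-- The square `w²` of the radial Gaussian profile at scale `τ`. -/
noncomputable def radialGaussianDensity (n : ℕ) (τ r : ℝ) : ℝ :=
  sphereVolume n * exp (-(r ^ 2) / (4 * τ)) / (4 * π * τ) ^ (((n : ℝ) + 1) / 2)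

namespace radialGaussianDensity

variable {n : ℕ} {τ : ℝ}

lemma pos (hτ : 0 < τ) (r : ℝ) : 0 < radialGaussianDensity n τ r := by
  unfold radialGaussianDensity
  have := sphereVolume_pos n
  positivity

lemma eq_mul_exp : radialGaussianDensity n τ = fun r =>
    sphereVolume n / (4 * π * τ) ^ (((n : ℝ) + 1) / 2) * exp (-(4 * τ)⁻¹ * r ^ 2) := by
  ext r
  rw [radialGaussianDensity, neg_div, div_eq_inv_mul (r ^ 2), ← neg_mul]
  ring

lemma pow_mul_eq (k : ℕ) :
    (fun r => r ^ k * radialGaussianDensity n τ r) = fun r =>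
      sphereVolume n / (4 * π * τ) ^ (((n : ℝ) + 1) / 2) *
        (r ^ k * exp (-(4 * τ)⁻¹ * r ^ 2)) := by
  ext r
  rw [eq_mul_exp]
  ring

lemma integrableOn_pow_mul (hτ : 0 < τ) (k : ℕ) :
    IntegrableOn (fun r => r ^ k * radialGaussianDensity n τ r) (Ioi 0) := by
  rw [pow_mul_eq]
  exact (integrableOn_pow_mul_exp_neg_mul_sq (by positivity) k).const_mul _

lemma integral_pow_mul (hτ : 0 < τ) :
    ∫ r in Ioi (0 : ℝ), r ^ n * radialGaussianDensity n τ r = 1 := by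
  have h4τ : (0 : ℝ) ≤ 4 * τ := by positivity
  rw [pow_mul_eq, integral_const_mul, integral_pow_mul_exp_neg_mul_sq (by positivity),
    inv_rpow h4τ, ← rpow_neg h4τ, neg_div, neg_neg, sphereVolume,
    show 4 * π * τ = 4 * τ * π by ring, mul_rpow h4τ pi_pos.le]
  have : Gamma (((n : ℝ) + 1) / 2) ≠ 0 := (Gamma_pos_of_pos (by positivity)).ne'
  field_simp

lemma integral_pow_add_two_mul (hτ : 0 < τ) :
    ∫ r in Ioi (0 : ℝ), r ^ (n + 2) * radialGaussianDensity n τ r = 2 * ((n : ℝ) + 1) * τ := by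
  rw [pow_mul_eq, integral_const_mul,
    integral_pow_add_two_mul_exp_neg_mul_sq (by positivity), mul_left_comm,
    ← integral_const_mul, ← pow_mul_eq, integral_pow_mul hτ]
  field_simp
  ring

lemma log_eq (hτ : 0 < τ) (r : ℝ) :
    log (radialGaussianDensity n τ r) = log (sphereVolume n)
      - ((n : ℝ) + 1) / 2 * log (4 * π * τ) - r ^ 2 / (4 * τ) := by
  have h4πτ : 0 < 4 * π * τ := by positivity
  rw [radialGaussianDensity, log_div (by have := sphereVolume_pos n; positivity)
      (rpow_pos_of_pos h4πτ _).ne', log_mul (sphereVolume_pos n).ne' (exp_pos _).ne', log_exp,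
    log_rpow h4πτ]
  ring

lemma hasDerivAt_sqrt (hτ : 0 < τ) (r : ℝ) :
    HasDerivAt (fun r => √(radialGaussianDensity n τ r))
      (-(r / (4 * τ)) * √(radialGaussianDensity n τ r)) r := by
  have hρ : HasDerivAt (radialGaussianDensity n τ)
      (-(r / (2 * τ)) * radialGaussianDensity n τ r) r := by
    rw [eq_mul_exp]
    refine (((hasDerivAt_pow 2 r).const_mul _).exp.const_mul _).congr_deriv ?_
    field_simp
    ring
  convert hρ.sqrt (pos hτ r).ne' using 1
  have hs : √(radialGaussianDensity n τ r) ≠ 0 := (sqrt_pos.2 (pos hτ r)).ne'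
  nth_rewrite 2 [← sq_sqrt (pos hτ r).le]
  field_simp
  ring

lemma integral_pow_mul_deriv_sqrt_sq (hτ : 0 < τ) :
    ∫ r in Ioi (0 : ℝ), r ^ n * deriv (fun r => √(radialGaussianDensity n τ r)) r ^ 2
      = ((n : ℝ) + 1) / (8 * τ) := by
  have h : ∀ r, r ^ n * deriv (fun r => √(radialGaussianDensity n τ r)) r ^ 2
      = (4 * τ)⁻¹ ^ 2 * (r ^ (n + 2) * radialGaussianDensity n τ r) := fun r => by
    rw [(hasDerivAt_sqrt hτ r).deriv, mul_pow, sq_sqrt (pos hτ r).le]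
    ring
  simp_rw [h, integral_const_mul, integral_pow_add_two_mul hτ]
  field_simp
  ring

lemma integral_pow_mul_mul_log (hτ : 0 < τ) :
    ∫ r in Ioi (0 : ℝ), r ^ n * radialGaussianDensity n τ r * log (radialGaussianDensity n τ r)
      = log (sphereVolume n) - ((n : ℝ) + 1) / 2 * log (4 * π * τ) - ((n : ℝ) + 1) / 2 := by
  set L := log (sphereVolume n) - ((n : ℝ) + 1) / 2 * log (4 * π * τ)
  have h : ∀ r, r ^ n * radialGaussianDensity n τ r * log (radialGaussianDensity n τ r)
      = L * (r ^ n * radialGaussianDensity n τ r)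
        - (4 * τ)⁻¹ * (r ^ (n + 2) * radialGaussianDensity n τ r) := fun r => by
    rw [log_eq hτ]
    ring
  simp_rw [h]
  rw [integral_sub ((integrableOn_pow_mul hτ n).const_mul _)
      ((integrableOn_pow_mul hτ (n + 2)).const_mul _), integral_const_mul, integral_const_mul,
    integral_pow_mul hτ, integral_pow_add_two_mul hτ]
  field_simp
  ring

end radialGaussianDensity

theorem radial_log_sobolev_equality_case_general
    (n : ℕ) (τ₀ : ℝ) (hτ₀ : 0 < τ₀)
    (w : ℝ → ℝ)
    (hw : w = fun r : ℝ => Real.sqrt (sphereVolume n * Real.exp (-(r ^ 2) / (4 * τ₀))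
      / (4 * Real.pi * τ₀) ^ (((n : ℝ) + 1) / 2))) :
    (∫ r in Ioi (0 : ℝ), r ^ n * (w r) ^ 2) = 1 ∧
    4 * τ₀ * ∫ r in Ioi (0 : ℝ), r ^ n * (deriv w r) ^ 2
      = (∫ r in Ioi (0 : ℝ), r ^ n * (w r) ^ 2 * Real.log ((w r) ^ 2))
        + (((n : ℝ) + 1) / 2) * Real.log (4 * Real.pi * τ₀) + ((n : ℝ) + 1)
        - Real.log (sphereVolume n) := by
  replace hw : w = fun r => √(radialGaussianDensity n τ₀ r) := hw
  have hw2 (r : ℝ) : w r ^ 2 = radialGaussianDensity n τ₀ r := by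
    rw [hw, sq_sqrt (radialGaussianDensity.pos hτ₀ r).le]
  simp_rw [hw2]
  refine ⟨radialGaussianDensity.integral_pow_mul hτ₀, ?_⟩
  rw [hw, radialGaussianDensity.integral_pow_mul_deriv_sqrt_sq hτ₀,
    radialGaussianDensity.integral_pow_mul_mul_log hτ₀]
  field_simp
  ring

/-- **Equality case (sharpness) of the radial logarithmic Sobolev inequality**:
for `n ≥ 1`, `τ₀ > 0` and the radial Gaussian profile
`w(r) = (ω_n e^(−r²/(4τ₀)) / (4πτ₀)^((n+1)/2))^(1/2)`, one has `∫₀^∞ rⁿ w² dr = 1` and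
`4τ₀ ∫₀^∞ rⁿ w'² dr = ∫₀^∞ rⁿ w² log(w²) dr + ((n+1)/2) log(4πτ₀) + (n+1) − log ω_n`. -/
theorem radial_log_sobolev_equality_case
    (n : ℕ) (hn : 1 ≤ n) (τ₀ : ℝ) (hτ₀ : 0 < τ₀)
    (w : ℝ → ℝ)
    (hw : w = fun r : ℝ => Real.sqrt (sphereVolume n * Real.exp (-(r ^ 2) / (4 * τ₀))
      / (4 * Real.pi * τ₀) ^ (((n : ℝ) + 1) / 2))) :
    (∫ r in Ioi (0 : ℝ), r ^ n * (w r) ^ 2) = 1 ∧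
    4 * τ₀ * ∫ r in Ioi (0 : ℝ), r ^ n * (deriv w r) ^ 2
      = (∫ r in Ioi (0 : ℝ), r ^ n * (w r) ^ 2 * Real.log ((w r) ^ 2))
        + (((n : ℝ) + 1) / 2) * Real.log (4 * Real.pi * τ₀) + ((n : ℝ) + 1)
        - Real.log (sphereVolume n) :=
  radial_log_sobolev_equality_case_general n τ₀ hτ₀ w hw
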